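/- Let Z be a normal topological space and let γ be a locally finite open cover of Z. For each W ∈ γ fix a real number a_W > 0. Then there exists a continuous function φ : Z → [0,1] such that every z ∈ Z admits some W ∈ γ with z ∈ W and 0 < φ(z) ≤ a_W. -/
import Mathlib


open unitInterval

/-- For a normal space `Z`, a locally finite open cover `γ` and prescribed
positive reals `a_W`, there is a continuous `φ : Z → [0,1]` such that each
`z ∈ Z` has a member `W` of the cover with `z ∈ W` and `0 < φ z ≤ a_W`. -/
theorem exists_small_positive_function {Z ι : Type*} [TopologicalSpace Z]
    [NormalSpace Z] (γ : ι → Set Z) (hopen : ∀ i, IsOpen (γ i))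
    (hcover : ∀ z : Z, ∃ i, z ∈ γ i) (hlf : LocallyFinite γ)
    (a : ι → ℝ) (ha : ∀ i, 0 < a i) :
    ∃ φ : C(Z, unitInterval),
      ∀ z : Z, ∃ i, z ∈ γ i ∧ 0 < (φ z : ℝ) ∧ (φ z : ℝ) ≤ a i := by
  classical
  set c : ι → ℝ := fun i => min (a i) 1 with hc
  have hc0 : ∀ i, 0 < c i := fun i => lt_min (ha i) one_pos
  have hc1 : ∀ i, c i ≤ 1 := fun i => min_le_right _ _
  have hca : ∀ i, c i ≤ a i := fun i => min_le_left _ _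
  obtain ⟨bc, hbc⟩ := BumpCovering.exists_isSubordinate_of_locallyFinite
    (s := (Set.univ : Set Z)) isClosed_univ γ hopen hlf
    (by intro z _; exact Set.mem_iUnion.2 (hcover z))
  set f := bc.toPartitionOfUnity with hf
  have hsub : f.IsSubordinate γ := hbc.toPartitionOfUnity
  set φ₀ : Z → ℝ := fun x => ∑ᶠ i, f i x • c i with hφ₀
  have hcont : Continuous φ₀ :=
    f.continuous_finsum_smul (g := fun i _ => c i) (fun i x _ => continuousAt_const)
  have key : ∀ x : Z, ∃ i, x ∈ γ i ∧ 0 < φ₀ x ∧ φ₀ x ≤ a i ∧ φ₀ x ≤ 1 := by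
    intro x
    have hsum : φ₀ x = ∑ i ∈ f.finsupport x, f i x * c i := by
      rw [hφ₀]
      exact (f.sum_finsupport_smul_eq_finsum (fun i _ => c i)).symm
    have hone : ∑ i ∈ f.finsupport x, f i x = 1 := f.sum_finsupport (Set.mem_univ x)
    have hne : (f.finsupport x).Nonempty := by
      by_contra h
      rw [Finset.not_nonempty_iff_eq_empty] at h
      rw [h, Finset.sum_empty] at hone
      exact one_ne_zero hone.symm
    -- pick i maximizing c i
    obtain ⟨i, hi, hmax⟩ := (f.finsupport x).exists_max_image c hne
    have hmemγ : ∀ j ∈ f.finsupport x, x ∈ γ j := by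
      intro j hj
      have : j ∈ Function.support fun i => f i x := (f.mem_finsupport x).1 hj
      exact hsub j (subset_tsupport _ this)
    have hfx : ∀ j, 0 ≤ f j x := fun j => f.nonneg j x
    have hfi : 0 < f i x := by
      have := (f.mem_finsupport x).1 hi
      exact lt_of_le_of_ne (hfx i) (Ne.symm this)
    refine ⟨i, hmemγ i hi, ?_, ?_, ?_⟩
    · rw [hsum]
      refine Finset.sum_pos' (fun j _ => mul_nonneg (hfx j) (hc0 j).le) ⟨i, hi, ?_⟩
      exact mul_pos hfi (hc0 i)
    · rw [hsum]
      calc ∑ j ∈ f.finsupport x, f j x * c j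
          ≤ ∑ j ∈ f.finsupport x, f j x * c i := by
            refine Finset.sum_le_sum fun j hj => ?_
            exact mul_le_mul_of_nonneg_left (hmax j hj) (hfx j)
        _ = c i := by rw [← Finset.sum_mul, hone, one_mul]
        _ ≤ a i := hca i
    · rw [hsum]
      calc ∑ j ∈ f.finsupport x, f j x * c j
          ≤ ∑ j ∈ f.finsupport x, f j x * 1 := by
            refine Finset.sum_le_sum fun j hj => ?_
            exact mul_le_mul_of_nonneg_left (hc1 j) (hfx j)
        _ = 1 := by simp [hone]
  have h01 : ∀ x, φ₀ x ∈ unitInterval := by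
    intro x
    obtain ⟨i, _, h1, _, h2⟩ := key x
    exact ⟨h1.le, h2⟩
  refine ⟨⟨fun x => ⟨φ₀ x, h01 x⟩, ?_⟩, ?_⟩
  · exact Continuous.subtype_mk hcont _
  · intro z
    obtain ⟨i, hz, h1, h2, _⟩ := key z
    exact ⟨i, hz, h1, h2⟩
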